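/- Let B(v) be a branch with roots r₁, r₂ and leaf v, and let G be obtained from B(v) by adding a new vertex q and the three edges (q, v), (q, r₁), (q, r₂). Then G is 3-connected. -/

import Mathlib

/-- A *branch* `B(v)`: a graph built from the `K₂` on roots `r₁, r₂` by a
sequence of extensions, in which every non-root vertex has exactly two distinct
parents added strictly earlier (witnessed by `rank`), the leaf `lf = v` is the
last added vertex (nobody's parent), and every non-root non-leaf vertex has at
least one child (so every vertex is an ancestor of the leaf). -/
structure Branch where
  verts : Finset ℕ
  r₁ : ℕ
  r₂ : ℕ
  lf : ℕ
  root_ne : r₁ ≠ r₂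
  r₁_mem : r₁ ∈ verts
  r₂_mem : r₂ ∈ verts
  leaf_mem : lf ∈ verts
  leaf_ne_r₁ : lf ≠ r₁
  leaf_ne_r₂ : lf ≠ r₂
  p₁ : ℕ → ℕ
  p₂ : ℕ → ℕ
  rank : ℕ → ℕ
  parent₁_mem : ∀ x ∈ verts, x ≠ r₁ → x ≠ r₂ → p₁ x ∈ verts
  parent₂_mem : ∀ x ∈ verts, x ≠ r₁ → x ≠ r₂ → p₂ x ∈ verts
  parents_ne : ∀ x ∈ verts, x ≠ r₁ → x ≠ r₂ → p₁ x ≠ p₂ x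
  rank_lt₁ : ∀ x ∈ verts, x ≠ r₁ → x ≠ r₂ → rank (p₁ x) < rank x
  rank_lt₂ : ∀ x ∈ verts, x ≠ r₁ → x ≠ r₂ → rank (p₂ x) < rank x
  leaf_no_child : ∀ x ∈ verts, x ≠ r₁ → x ≠ r₂ → p₁ x ≠ lf ∧ p₂ x ≠ lf
  has_child : ∀ x ∈ verts, x ≠ r₁ → x ≠ r₂ → x ≠ lf →
    ∃ c ∈ verts, c ≠ r₁ ∧ c ≠ r₂ ∧ (p₁ c = x ∨ p₂ c = x)

/-- The edge set of a branch: the root edge together with all parent-child edges. -/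
def Branch.edges (B : Branch) : Finset (Sym2 ℕ) :=
  insert s(B.r₁, B.r₂)
    ((B.verts.filter (fun x => x ≠ B.r₁ ∧ x ≠ B.r₂)).biUnion
      (fun x => {s(x, B.p₁ x), s(x, B.p₂ x)}))

/-- The branch viewed as a simple graph on `ℕ`. -/
def Branch.graph (B : Branch) : SimpleGraph ℕ :=
  SimpleGraph.fromEdgeSet (B.edges : Set (Sym2 ℕ))

/-- The vertex set of the graph `G` obtained from the branch `B` by adding a
new vertex `q`. -/
def extVerts (B : Branch) (q : ℕ) : Finset ℕ := insert q B.verts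

/-- The edge set of the graph `G` obtained from the branch `B` by adding a new
vertex `q` together with the three edges `(q,v)`, `(q,r₁)`, `(q,r₂)`. -/
def extEdges (B : Branch) (q : ℕ) : Finset (Sym2 ℕ) :=
  insert s(q, B.lf) (insert s(q, B.r₁) (insert s(q, B.r₂) B.edges))

/-- The extended graph as a simple graph on `ℕ`. -/
def extGraph (B : Branch) (q : ℕ) : SimpleGraph ℕ :=
  SimpleGraph.fromEdgeSet (extEdges B q : Set (Sym2 ℕ))

/-!
Fix the deleted set `T = {t₁, t₂}`. Walking down a branch along parents outside `T` ends either
at a root outside `T` or at a vertex `z` both of whose parents lie in `T`. If `q ∈ T`, at most one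
vertex of `B(v)` is deleted, so the second outcome is impossible (parents are distinct) and all
survivors reach the two adjacent roots. If `q ∉ T`, every survivor reaches `q`: a root is adjacent
to `q`, and a blocked vertex `z` has `T = {p₁ z, p₂ z}`, both of rank below that of `z`, so the
walk up from `z` to the leaf `v` through children of increasing rank avoids `T` and ends next
to `q`.
-/

namespace SimpleGraph

variable {V : Type*} {G H : SimpleGraph V} {T T' : Set V} {x y z : V}

def ReachableAvoiding (G : SimpleGraph V) (T : Set V) (x y : V) : Prop :=
  ∃ w : G.Walk x y, ∀ u ∈ w.support, u ∉ T

namespace ReachableAvoiding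

lemma refl (hx : x ∉ T) : G.ReachableAvoiding T x x :=
  ⟨.nil, by simpa using hx⟩

lemma symm : G.ReachableAvoiding T x y → G.ReachableAvoiding T y x
  | ⟨w, hw⟩ => ⟨w.reverse, by simpa [Walk.support_reverse] using hw⟩

lemma trans : G.ReachableAvoiding T x y → G.ReachableAvoiding T y z →
    G.ReachableAvoiding T x z
  | ⟨w, hw⟩, ⟨w', hw'⟩ => ⟨w.append w', fun u hu =>
      (w.mem_support_append_iff w').1 hu |>.elim (hw u) (hw' u)⟩

lemma mono (hGH : G ≤ H) (hT : T' ⊆ T) :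
    G.ReachableAvoiding T x y → H.ReachableAvoiding T' x y
  | ⟨w, hw⟩ => ⟨w.mapLe hGH, fun u hu hu' =>
      hw u (by rwa [Walk.support_mapLe_eq_support] at hu) (hT hu')⟩

lemma right_notMem : G.ReachableAvoiding T x y → y ∉ T
  | ⟨w, hw⟩ => hw y w.end_mem_support

end ReachableAvoiding

lemma Adj.reachableAvoiding (h : G.Adj x y) (hx : x ∉ T) (hy : y ∉ T) :
    G.ReachableAvoiding T x y :=
  ⟨h.toWalk, by simp [hx, hy]⟩

end SimpleGraph

open SimpleGraph

namespace Branch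

variable (B : Branch)

lemma graph_adj_p₁ {x : ℕ} (hx : x ∈ B.verts) (h1 : x ≠ B.r₁) (h2 : x ≠ B.r₂) :
    B.graph.Adj x (B.p₁ x) := by
  refine (fromEdgeSet_adj _).2 ⟨Finset.mem_insert_of_mem <| Finset.mem_biUnion.2
    ⟨x, by simp [hx, h1, h2], by simp⟩,
    fun h => (B.rank_lt₁ x hx h1 h2).ne (congrArg B.rank h.symm)⟩

lemma graph_adj_p₂ {x : ℕ} (hx : x ∈ B.verts) (h1 : x ≠ B.r₁) (h2 : x ≠ B.r₂) :
    B.graph.Adj x (B.p₂ x) := by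
  refine (fromEdgeSet_adj _).2 ⟨Finset.mem_insert_of_mem <| Finset.mem_biUnion.2
    ⟨x, by simp [hx, h1, h2], by simp⟩,
    fun h => (B.rank_lt₂ x hx h1 h2).ne (congrArg B.rank h.symm)⟩

lemma graph_adj_roots : B.graph.Adj B.r₁ B.r₂ :=
  (fromEdgeSet_adj _).2 ⟨Finset.mem_insert_self _ _, B.root_ne⟩

theorem reachableAvoiding_leaf {z : ℕ} (hz : z ∈ B.verts) (h1 : z ≠ B.r₁) (h2 : z ≠ B.r₂) :
    B.graph.ReachableAvoiding {u | B.rank u < B.rank z} z B.lf := by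
  by_cases hzl : z = B.lf
  · subst hzl
    exact .refl (by simp)
  obtain ⟨c, hc, hc1, hc2, hcz⟩ := B.has_child z hz h1 h2 hzl
  have hzc : B.graph.Adj z c ∧ B.rank z < B.rank c := by
    rcases hcz with rfl | rfl
    exacts [⟨(B.graph_adj_p₁ hc hc1 hc2).symm, B.rank_lt₁ c hc hc1 hc2⟩,
      ⟨(B.graph_adj_p₂ hc hc1 hc2).symm, B.rank_lt₂ c hc hc1 hc2⟩]
  exact (hzc.1.reachableAvoiding (by simp) (by simpa using hzc.2.not_gt)).trans
    ((reachableAvoiding_leaf hc hc1 hc2).mono le_rfl fun u hu => lt_trans hu hzc.2)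
termination_by (B.verts.filter fun u => B.rank z < B.rank u).card
decreasing_by
  refine Finset.card_lt_card ⟨fun u hu => ?_, fun hsub => ?_⟩
  · simp only [Finset.mem_filter] at hu ⊢
    exact ⟨hu.1, hzc.2.trans hu.2⟩
  · have := hsub (Finset.mem_filter.2 ⟨hc, hzc.2⟩)
    simp at this

theorem reachableAvoiding_root_or_blocked (T : Set ℕ) {x : ℕ} (hx : x ∈ B.verts) (hxT : x ∉ T) :
    (∃ r, (r = B.r₁ ∨ r = B.r₂) ∧ B.graph.ReachableAvoiding T x r) ∨
    ∃ z ∈ B.verts, z ≠ B.r₁ ∧ z ≠ B.r₂ ∧ B.p₁ z ∈ T ∧ B.p₂ z ∈ T ∧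
      B.graph.ReachableAvoiding T x z := by
  by_cases h1 : x = B.r₁
  · exact .inl ⟨x, .inl h1, .refl hxT⟩
  by_cases h2 : x = B.r₂
  · exact .inl ⟨x, .inr h2, .refl hxT⟩
  have step : ∀ p ∈ B.verts, B.graph.Adj x p → B.rank p < B.rank x → p ∉ T →
      (∃ r, (r = B.r₁ ∨ r = B.r₂) ∧ B.graph.ReachableAvoiding T x r) ∨
      ∃ z ∈ B.verts, z ≠ B.r₁ ∧ z ≠ B.r₂ ∧ B.p₁ z ∈ T ∧ B.p₂ z ∈ T ∧
        B.graph.ReachableAvoiding T x z := by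
    intro p hp hxp hlt hpT
    have extend : ∀ {w}, B.graph.ReachableAvoiding T p w → B.graph.ReachableAvoiding T x w :=
      (hxp.reachableAvoiding hxT hpT).trans
    rcases reachableAvoiding_root_or_blocked T hp hpT with
      ⟨r, hr, hpr⟩ | ⟨z, hz, hz1, hz2, hz₁T, hz₂T, hpz⟩
    exacts [.inl ⟨r, hr, extend hpr⟩, .inr ⟨z, hz, hz1, hz2, hz₁T, hz₂T, extend hpz⟩]
  by_cases hp₁T : B.p₁ x ∈ T
  · by_cases hp₂T : B.p₂ x ∈ T
    · exact .inr ⟨x, hx, h1, h2, hp₁T, hp₂T, .refl hxT⟩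
    · exact step _ (B.parent₂_mem x hx h1 h2) (B.graph_adj_p₂ hx h1 h2)
        (B.rank_lt₂ x hx h1 h2) hp₂T
  · exact step _ (B.parent₁_mem x hx h1 h2) (B.graph_adj_p₁ hx h1 h2)
      (B.rank_lt₁ x hx h1 h2) hp₁T
termination_by B.rank x

/-- A branch is 2-connected. -/
theorem reachableAvoiding_of_subsingleton {T : Set ℕ} (hT : (T ∩ B.verts).Subsingleton)
    {x y : ℕ} (hx : x ∈ B.verts) (hxT : x ∉ T) (hy : y ∈ B.verts) (hyT : y ∉ T) :
    B.graph.ReachableAvoiding T x y := by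
  have toRoot : ∀ v ∈ B.verts, v ∉ T →
      ∃ r, (r = B.r₁ ∨ r = B.r₂) ∧ B.graph.ReachableAvoiding T v r := by
    intro v hv hvT
    rcases B.reachableAvoiding_root_or_blocked T hv hvT with h | ⟨z, hz, h1, h2, hz₁T, hz₂T, -⟩
    · exact h
    · exact absurd (hT ⟨hz₁T, B.parent₁_mem z hz h1 h2⟩ ⟨hz₂T, B.parent₂_mem z hz h1 h2⟩)
        (B.parents_ne z hz h1 h2)
  have roots : ∀ r r', (r = B.r₁ ∨ r = B.r₂) → (r' = B.r₁ ∨ r' = B.r₂) → r ∉ T → r' ∉ T →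
      B.graph.ReachableAvoiding T r r' := by
    rintro r r' (rfl | rfl) (rfl | rfl) hr hr'
    exacts [.refl hr, B.graph_adj_roots.reachableAvoiding hr hr',
      B.graph_adj_roots.symm.reachableAvoiding hr hr', .refl hr]
  obtain ⟨r, hr, hxr⟩ := toRoot x hx hxT
  obtain ⟨r', hr', hyr'⟩ := toRoot y hy hyT
  exact hxr.trans ((roots r r' hr hr' hxr.right_notMem hyr'.right_notMem).trans hyr'.symm)

end Branch

section Extension

variable (B : Branch)

lemma graph_le_extGraph (q : ℕ) : B.graph ≤ extGraph B q :=
  fromEdgeSet_mono fun _ he => by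
    simp only [extEdges, Finset.coe_insert, Set.mem_insert_iff]
    exact .inr (.inr (.inr he))

lemma extGraph_adj_q {q : ℕ} (hq : q ∉ B.verts) {v : ℕ} (hv : v = B.lf ∨ v = B.r₁ ∨ v = B.r₂) :
    (extGraph B q).Adj v q := by
  have hvB : v ∈ B.verts := by
    rcases hv with rfl | rfl | rfl
    exacts [B.leaf_mem, B.r₁_mem, B.r₂_mem]
  refine (fromEdgeSet_adj _).2 ⟨?_, fun h => hq (h ▸ hvB)⟩
  simp only [extEdges, Finset.coe_insert, Set.mem_insert_iff, Sym2.eq_swap (a := v)]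
  rcases hv with rfl | rfl | rfl <;> simp

theorem extGraph_reachableAvoiding_q {q : ℕ} (hq : q ∉ B.verts) {t₁ t₂ : ℕ}
    (hqT : q ∉ ({t₁, t₂} : Set ℕ)) {z : ℕ} (hz : z ∈ B.verts) (hzT : z ∉ ({t₁, t₂} : Set ℕ)) :
    (extGraph B q).ReachableAvoiding {t₁, t₂} z q := by
  have toQ : ∀ v, (v = B.lf ∨ v = B.r₁ ∨ v = B.r₂) → v ∉ ({t₁, t₂} : Set ℕ) →
      (extGraph B q).ReachableAvoiding {t₁, t₂} v q :=
    fun v hv hvT => (extGraph_adj_q B hq hv).reachableAvoiding hvT hqT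
  rcases B.reachableAvoiding_root_or_blocked _ hz hzT with
    ⟨r, hr, hzr⟩ | ⟨z', hz', h1, h2, hz'₁T, hz'₂T, hzz'⟩
  · exact (hzr.mono (graph_le_extGraph B q) subset_rfl).trans
      (toQ r (.inr hr) hzr.right_notMem)
  · have hT : ({t₁, t₂} : Set ℕ) ⊆ {u | B.rank u < B.rank z'} := by
      intro t ht
      have : t = B.p₁ z' ∨ t = B.p₂ z' := by
        have := B.parents_ne z' hz' h1 h2
        simp only [Set.mem_insert_iff, Set.mem_singleton_iff] at ht hz'₁T hz'₂T
        omega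
      rcases this with rfl | rfl
      exacts [B.rank_lt₁ z' hz' h1 h2, B.rank_lt₂ z' hz' h1 h2]
    have hz'lf := (B.reachableAvoiding_leaf hz' h1 h2).mono le_rfl hT
    exact ((hzz'.trans hz'lf).mono (graph_le_extGraph B q) subset_rfl).trans
      (toQ _ (.inl rfl) hz'lf.right_notMem)

theorem extGraph_reachableAvoiding {q : ℕ} (hq : q ∉ B.verts) {t₁ t₂ x y : ℕ}
    (hx : x ∈ extVerts B q) (hxT : x ∉ ({t₁, t₂} : Set ℕ))
    (hy : y ∈ extVerts B q) (hyT : y ∉ ({t₁, t₂} : Set ℕ)) :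
    (extGraph B q).ReachableAvoiding {t₁, t₂} x y := by
  by_cases hqT : q ∈ ({t₁, t₂} : Set ℕ)
  · have mem : ∀ v ∈ extVerts B q, v ∉ ({t₁, t₂} : Set ℕ) → v ∈ B.verts := fun v hv hvT =>
      (Finset.mem_insert.1 hv).resolve_left fun h => hvT (h ▸ hqT)
    have hT : (({t₁, t₂} : Set ℕ) ∩ B.verts).Subsingleton := by
      rintro a ⟨ha, haB⟩ b ⟨hb, hbB⟩
      have : a ≠ q := fun h => hq (h ▸ haB)
      have : b ≠ q := fun h => hq (h ▸ hbB)
      simp only [Set.mem_insert_iff, Set.mem_singleton_iff] at ha hb hqT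
      omega
    exact (B.reachableAvoiding_of_subsingleton hT (mem x hx hxT) hxT (mem y hy hyT) hyT).mono
      (graph_le_extGraph B q) subset_rfl
  · have toQ : ∀ v ∈ extVerts B q, v ∉ ({t₁, t₂} : Set ℕ) →
        (extGraph B q).ReachableAvoiding {t₁, t₂} v q := by
      intro v hv hvT
      rcases Finset.mem_insert.1 hv with rfl | hv
      exacts [.refl hqT, extGraph_reachableAvoiding_q B hq hqT hv hvT]
    exact (toQ x hx hxT).trans (toQ y hy hyT).symm

end Extension

/-- the graph obtained from a branch `B(v)` (with at least 4
vertices) by adding a new vertex `q` adjacent to `v`, `r₁` and `r₂` is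
3-connected: it has more than 3 vertices and removing any two vertices leaves
it connected. -/
theorem ext_graph_three_connected (B : Branch) (q : ℕ) (hq : q ∉ B.verts)
    (h4 : 4 ≤ B.verts.card) :
    3 < (extVerts B q).card ∧
    ∀ t₁ t₂ : ℕ, ∀ x ∈ extVerts B q, ∀ y ∈ extVerts B q,
      x ≠ t₁ → x ≠ t₂ → y ≠ t₁ → y ≠ t₂ →
        ∃ w : (extGraph B q).Walk x y, t₁ ∉ w.support ∧ t₂ ∉ w.support := by
  refine ⟨by rw [extVerts, Finset.card_insert_of_notMem hq]; omega, ?_⟩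
  intro t₁ t₂ x hx y hy hx₁ hx₂ hy₁ hy₂
  obtain ⟨w, hw⟩ := extGraph_reachableAvoiding B hq (t₁ := t₁) (t₂ := t₂)
    hx (by simp [hx₁, hx₂]) hy (by simp [hy₁, hy₂])
  exact ⟨w, fun h => hw _ h (.inl rfl), fun h => hw _ h (.inr rfl)⟩
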